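/- Let n ≥ 3 be an integer, let G be a finite simple graph that is {K_n, S̃_n}-free, let x be a vertex of G, and let X be a subset of the neighborhood N_G(x). Then insp(G[{x} ∪ X]) ≤ ξ_{n,n-2}, where G[·] denotes the induced subgraph. -/

import Mathlib

open SimpleGraph

/-- `G` contains an induced subgraph isomorphic to `H`. -/
def HasInducedCopy {V W : Type*} (G : SimpleGraph V) (H : SimpleGraph W) : Prop :=
  ∃ f : W ↪ V, ∀ a b : W, G.Adj (f a) (f b) ↔ H.Adj a b

/-- The star `K_{1,m}` (one center plus `m` leaves). -/
def starGraph (m : ℕ) : SimpleGraph (Unit ⊕ Fin m) := completeBipartiteGraph Unit (Fin m)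

/-- `S` induces in `G` a subgraph isomorphic to a path `P_m` on `m ≥ 1` vertices. -/
def IsInducedPathSet {V : Type*} (G : SimpleGraph V) (S : Set V) : Prop :=
  ∃ m : ℕ, 1 ≤ m ∧ Nonempty ((G.induce S) ≃g pathGraph m)

/-- `S` induces in `G` a subgraph isomorphic to a star `K_{1,m}` with `m ≥ 1`. -/
def IsInducedStarSet {V : Type*} (G : SimpleGraph V) (S : Set V) : Prop :=
  ∃ m : ℕ, 1 ≤ m ∧ Nonempty ((G.induce S) ≃g _root_.starGraph m)

/-- `S` consists of a single vertex (i.e. induces `K_1`). -/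
def IsSingletonSet {V : Type*} (S : Set V) : Prop := ∃ v, S = {v}

/-- `S` is the vertex set of an isometric (shortest) path of `G`. -/
def IsIsometricPathSet {V : Type*} (G : SimpleGraph V) (S : Set V) : Prop :=
  ∃ (u v : V) (p : G.Walk u v), p.IsPath ∧ p.length = G.dist u v ∧
    S = {x | x ∈ p.support}

/-- `P` is a family of sets, all satisfying `pred`, whose union is all of `V`. -/
def IsCoverBy {V : Type*} (P : Finset (Set V)) (pred : Set V → Prop) : Prop :=
  (∀ S ∈ P, pred S) ∧ ∀ v : V, ∃ S ∈ P, v ∈ S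

/-- `P` is a cover by sets satisfying `pred`, whose members are pairwise disjoint. -/
def IsPartitionBy {V : Type*} (P : Finset (Set V)) (pred : Set V → Prop) : Prop :=
  IsCoverBy P pred ∧ ∀ S ∈ P, ∀ T ∈ P, S ≠ T → ∀ v, v ∈ S → v ∉ T

/-- Minimum cardinality of a cover by sets satisfying `pred`. -/
noncomputable def coverNumber {V : Type*} (pred : Set V → Prop) : ℕ :=
  sInf {k | ∃ P : Finset (Set V), P.card = k ∧ IsCoverBy P pred}

/-- Minimum cardinality of a partition into sets satisfying `pred`. -/
noncomputable def partitionNumber {V : Type*} (pred : Set V → Prop) : ℕ :=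
  sInf {k | ∃ P : Finset (Set V), P.card = k ∧ IsPartitionBy P pred}

/-- The induced SP-cover number. -/
noncomputable def inspc {V : Type*} (G : SimpleGraph V) : ℕ :=
  coverNumber (fun S => IsInducedStarSet G S ∨ IsInducedPathSet G S)

/-- The induced SP-partition number. -/
noncomputable def inspp {V : Type*} (G : SimpleGraph V) : ℕ :=
  partitionNumber (fun S => IsInducedStarSet G S ∨ IsInducedPathSet G S)

/-- The induced star cover number. -/
noncomputable def insc {V : Type*} (G : SimpleGraph V) : ℕ :=
  coverNumber (fun S => IsInducedStarSet G S ∨ IsSingletonSet S)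

/-- The induced star partition number. -/
noncomputable def insp {V : Type*} (G : SimpleGraph V) : ℕ :=
  partitionNumber (fun S => IsInducedStarSet G S ∨ IsSingletonSet S)

/-- The induced path cover number. -/
noncomputable def inpc {V : Type*} (G : SimpleGraph V) : ℕ :=
  coverNumber (fun S => IsInducedPathSet G S)

/-- The induced path partition number. -/
noncomputable def inpp {V : Type*} (G : SimpleGraph V) : ℕ :=
  partitionNumber (fun S => IsInducedPathSet G S)

/-- The isometric path cover number. -/
noncomputable def ispc {V : Type*} (G : SimpleGraph V) : ℕ :=
  coverNumber (fun S => IsIsometricPathSet G S)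

/-- The isometric path partition number. -/
noncomputable def ispp {V : Type*} (G : SimpleGraph V) : ℕ :=
  partitionNumber (fun S => IsIsometricPathSet G S)

/-- `S*_n` : center `x = inl ()`, middle vertices `y i = inr (inl i)`,
leaves `z i = inr (inr i)`; edges `x yᵢ` and `yᵢ zᵢ`. -/
def SStar (n : ℕ) : SimpleGraph (Unit ⊕ Fin n ⊕ Fin n) :=
  SimpleGraph.fromRel (fun a b =>
    (∃ i : Fin n, a = Sum.inl () ∧ b = Sum.inr (Sum.inl i)) ∨
    (∃ i : Fin n, a = Sum.inr (Sum.inl i) ∧ b = Sum.inr (Sum.inr i)))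

/-- `S̃_n` : `S*_n` together with the edges `x zᵢ`. -/
def STilde (n : ℕ) : SimpleGraph (Unit ⊕ Fin n ⊕ Fin n) :=
  SimpleGraph.fromRel (fun a b =>
    (∃ i : Fin n, a = Sum.inl () ∧ b = Sum.inr (Sum.inl i)) ∨
    (∃ i : Fin n, a = Sum.inr (Sum.inl i) ∧ b = Sum.inr (Sum.inr i)) ∨
    (∃ i : Fin n, a = Sum.inl () ∧ b = Sum.inr (Sum.inr i)))

/-- `F⁽¹⁾_n` : vertices `x₁ = inl 0`, `x₂ = inl 1`, `yᵢ = inr (inl i)`, `zᵢ = inr (inr i)`;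
edges `x₁x₂`, `x₁y₁`, `x₁z₁`, and two paths `y₁⋯yₙ`, `z₁⋯zₙ`. -/
def F1 (n : ℕ) : SimpleGraph (Fin 2 ⊕ Fin n ⊕ Fin n) :=
  SimpleGraph.fromRel (fun a b =>
    (a = Sum.inl 0 ∧ b = Sum.inl 1) ∨
    (∃ j : Fin n, (j : ℕ) = 0 ∧ a = Sum.inl 0 ∧ b = Sum.inr (Sum.inl j)) ∨
    (∃ j : Fin n, (j : ℕ) = 0 ∧ a = Sum.inl 0 ∧ b = Sum.inr (Sum.inr j)) ∨
    (∃ i j : Fin n, (i : ℕ) + 1 = (j : ℕ) ∧ a = Sum.inr (Sum.inl i) ∧ b = Sum.inr (Sum.inl j)) ∨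
    (∃ i j : Fin n, (i : ℕ) + 1 = (j : ℕ) ∧ a = Sum.inr (Sum.inr i) ∧ b = Sum.inr (Sum.inr j)))

/-- `F⁽²⁾_n` : vertex `x₁ = inl ()`, `yᵢ = inr (inl i)`, `zᵢ = inr (inr i)`;
edges `x₁y₁`, `x₁z₁`, `y₁z₁`, and two paths `y₁⋯yₙ`, `z₁⋯zₙ`. -/
def F2 (n : ℕ) : SimpleGraph (Unit ⊕ Fin n ⊕ Fin n) :=
  SimpleGraph.fromRel (fun a b =>
    (∃ j : Fin n, (j : ℕ) = 0 ∧ a = Sum.inl () ∧ b = Sum.inr (Sum.inl j)) ∨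
    (∃ j : Fin n, (j : ℕ) = 0 ∧ a = Sum.inl () ∧ b = Sum.inr (Sum.inr j)) ∨
    (∃ i j : Fin n, (i : ℕ) = 0 ∧ (j : ℕ) = 0 ∧ a = Sum.inr (Sum.inl i) ∧ b = Sum.inr (Sum.inr j)) ∨
    (∃ i j : Fin n, (i : ℕ) + 1 = (j : ℕ) ∧ a = Sum.inr (Sum.inl i) ∧ b = Sum.inr (Sum.inl j)) ∨
    (∃ i j : Fin n, (i : ℕ) + 1 = (j : ℕ) ∧ a = Sum.inr (Sum.inr i) ∧ b = Sum.inr (Sum.inr j)))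

/-- `F⁽³⁾_n` : vertices `xᵢ = inl i`, `yᵢ = inr (inl i)`, `zᵢ = inr (inr i)`;
edges `xᵢy₁`, `xᵢz₁` for all `i`, and two paths `y₁⋯yₙ`, `z₁⋯zₙ`. -/
def F3 (n : ℕ) : SimpleGraph (Fin n ⊕ Fin n ⊕ Fin n) :=
  SimpleGraph.fromRel (fun a b =>
    (∃ (i j : Fin n), (j : ℕ) = 0 ∧ a = Sum.inl i ∧ b = Sum.inr (Sum.inl j)) ∨
    (∃ (i j : Fin n), (j : ℕ) = 0 ∧ a = Sum.inl i ∧ b = Sum.inr (Sum.inr j)) ∨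
    (∃ i j : Fin n, (i : ℕ) + 1 = (j : ℕ) ∧ a = Sum.inr (Sum.inl i) ∧ b = Sum.inr (Sum.inl j)) ∨
    (∃ i j : Fin n, (i : ℕ) + 1 = (j : ℕ) ∧ a = Sum.inr (Sum.inr i) ∧ b = Sum.inr (Sum.inr j)))

/-- `F⁽⁴⁾_n` : `F⁽³⁾_n` with only `x₁, x₂` kept (no edge `x₁x₂`). -/
def F4 (n : ℕ) : SimpleGraph (Fin 2 ⊕ Fin n ⊕ Fin n) :=
  SimpleGraph.fromRel (fun a b =>
    (∃ (i : Fin 2) (j : Fin n), (j : ℕ) = 0 ∧ a = Sum.inl i ∧ b = Sum.inr (Sum.inl j)) ∨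
    (∃ (i : Fin 2) (j : Fin n), (j : ℕ) = 0 ∧ a = Sum.inl i ∧ b = Sum.inr (Sum.inr j)) ∨
    (∃ i j : Fin n, (i : ℕ) + 1 = (j : ℕ) ∧ a = Sum.inr (Sum.inl i) ∧ b = Sum.inr (Sum.inl j)) ∨
    (∃ i j : Fin n, (i : ℕ) + 1 = (j : ℕ) ∧ a = Sum.inr (Sum.inr i) ∧ b = Sum.inr (Sum.inr j)))

/-- `F⁽⁵⁾_n` : `F⁽⁴⁾_n` plus the edge `x₁x₂`. -/
def F5 (n : ℕ) : SimpleGraph (Fin 2 ⊕ Fin n ⊕ Fin n) :=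
  SimpleGraph.fromRel (fun a b =>
    (a = Sum.inl 0 ∧ b = Sum.inl 1) ∨
    (∃ (i : Fin 2) (j : Fin n), (j : ℕ) = 0 ∧ a = Sum.inl i ∧ b = Sum.inr (Sum.inl j)) ∨
    (∃ (i : Fin 2) (j : Fin n), (j : ℕ) = 0 ∧ a = Sum.inl i ∧ b = Sum.inr (Sum.inr j)) ∨
    (∃ i j : Fin n, (i : ℕ) + 1 = (j : ℕ) ∧ a = Sum.inr (Sum.inl i) ∧ b = Sum.inr (Sum.inl j)) ∨
    (∃ i j : Fin n, (i : ℕ) + 1 = (j : ℕ) ∧ a = Sum.inr (Sum.inr i) ∧ b = Sum.inr (Sum.inr j)))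

/-- The Ramsey number `R(a,b)` : least `R` such that every simple graph on at least `R`
vertices contains a clique of size `a` or an independent set of size `b`. -/
noncomputable def ramseyNumber (a b : ℕ) : ℕ :=
  sInf {R : ℕ | ∀ (m : ℕ) (G : SimpleGraph (Fin m)), R ≤ m →
    (∃ s : Finset (Fin m), s.card = a ∧ ∀ u ∈ s, ∀ v ∈ s, u ≠ v → G.Adj u v) ∨
    (∃ s : Finset (Fin m), s.card = b ∧ ∀ u ∈ s, ∀ v ∈ s, u ≠ v → ¬ G.Adj u v)}

/-- `ξ_{n,i} = ((R(n-1,n)-1)^i - 1)/(R(n-1,n)-2)`. -/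
noncomputable def xi (n i : ℕ) : ℕ :=
  ((ramseyNumber (n - 1) n - 1) ^ i - 1) / (ramseyNumber (n - 1) n - 2)


/-!
Let `Y = X`. Take a maximal independent set `I ⊆ Y` and a minimal `A ⊆ I` dominating `Y \ I`;
every `u ∈ A` then has a private neighbour `z u ∈ Y \ I`. All `u` and `z u` are neighbours of `x`,
so Ramsey's theorem on the `z u` gives either an `(n-1)`-clique, which with `x` is a `K_n`, or
`n` independent ones, which with their partners and `x` induce `S̃_n`; hence `|A| < R(n-1,n)`.
Now `x` and `I \ A` form a star, and sending each vertex of `Y \ I` to a neighbour in `A` cuts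
the rest into fibres `{u} ∪ F u` with `F u ⊆ N(u) ∩ Y`, whose clique number is one less.
Recursing on the fibres, a neighbourhood of clique number at most `i + 1` needs at most
`1 + (R - 1) ξ_{n,i} = ξ_{n,i+1}` stars, with `ξ_{n,1} = 1` for an independent one.
-/

open Finset

namespace SimpleGraph

section

variable {V : Type*} {G : SimpleGraph V}

theorem IsIndepSet.not_adj {s : Set V} (hs : G.IsIndepSet s) {a b : V} (ha : a ∈ s)
    (hb : b ∈ s) : ¬ G.Adj a b :=
  fun h => hs ha hb h.ne h

theorem cliqueFree_of_not_hasInducedCopy {n : ℕ}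
    (h : ¬ HasInducedCopy G (completeGraph (Fin n))) : G.CliqueFree n := by
  by_contra hG
  exact h ⟨(topEmbeddingOfNotCliqueFree hG).toEmbedding,
    fun _ _ => (topEmbeddingOfNotCliqueFree hG).map_rel_iff⟩

theorem exists_isNClique_or_isNIndepSet_of_two_pow_le (G : SimpleGraph V) (a b : ℕ)
    (Z : Finset V) (hZ : 2 ^ (a + b) ≤ #Z) :
    (∃ s ⊆ Z, G.IsNClique a s) ∨ ∃ s ⊆ Z, G.IsNIndepSet b s := by
  classical
  induction a generalizing b Z with
  | zero => exact .inl ⟨∅, empty_subset _, isNClique_zero.mpr rfl⟩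
  | succ a iha =>
    induction b generalizing Z with
    | zero => exact .inr ⟨∅, empty_subset _, (isNClique_compl G).mp (isNClique_zero.mpr rfl)⟩
    | succ b ihb =>
      obtain ⟨v, hv⟩ : Z.Nonempty := card_pos.mp (lt_of_lt_of_le (Nat.two_pow_pos _) hZ)
      set N := (Z.erase v).filter (G.Adj v)
      set M := (Z.erase v).filter (fun w => ¬ G.Adj v w)
      have hNZ : N ⊆ Z := (filter_subset _ _).trans (erase_subset _ _)
      have hMZ : M ⊆ Z := (filter_subset _ _).trans (erase_subset _ _)
      have hNM : #N + #M + 1 = #Z := by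
        rw [card_filter_add_card_filter_not, card_erase_add_one hv]
      have hsplit : 2 ^ (a + (b + 1)) ≤ #N ∨ 2 ^ (a + 1 + b) ≤ #M := by
        by_contra! h
        have : 2 ^ (a + 1 + (b + 1)) = 2 ^ (a + (b + 1)) + 2 ^ (a + 1 + b) := by ring
        omega
      rcases hsplit with hN | hM
      · rcases iha (b + 1) N hN with ⟨s, hsN, hs⟩ | ⟨s, hsN, hs⟩
        · refine .inl ⟨insert v s, insert_subset hv (hsN.trans hNZ), hs.insert fun w hw => ?_⟩
          exact (mem_filter.mp (hsN hw)).2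
        · exact .inr ⟨s, hsN.trans hNZ, hs⟩
      · rcases ihb M hM with ⟨s, hsM, hs⟩ | ⟨s, hsM, hs⟩
        · exact .inl ⟨s, hsM.trans hMZ, hs⟩
        · refine .inr ⟨insert v s, insert_subset hv (hsM.trans hMZ), ?_⟩
          rw [← isNClique_compl] at hs ⊢
          refine hs.insert fun w hw => ?_
          obtain ⟨hwZ, hvw⟩ := mem_filter.mp (hsM hw)
          exact (compl_adj G v w).mpr ⟨(ne_of_mem_erase hwZ).symm, hvw⟩

theorem ramseyNumber_spec (a b : ℕ) : ∀ (m : ℕ) (G : SimpleGraph (Fin m)), ramseyNumber a b ≤ m →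
    (∃ s : Finset (Fin m), s.card = a ∧ ∀ u ∈ s, ∀ v ∈ s, u ≠ v → G.Adj u v) ∨
    (∃ s : Finset (Fin m), s.card = b ∧ ∀ u ∈ s, ∀ v ∈ s, u ≠ v → ¬ G.Adj u v) := by
  refine Nat.sInf_mem (s := {R | ∀ (m : ℕ) (G : SimpleGraph (Fin m)), R ≤ m → _})
    ⟨2 ^ (a + b), fun m G hm => ?_⟩
  rcases G.exists_isNClique_or_isNIndepSet_of_two_pow_le a b univ (by simpa using hm) with
    ⟨s, -, hs⟩ | ⟨s, -, hs⟩
  · exact .inl ⟨s, hs.card_eq, fun u hu v hv => hs.isClique hu hv⟩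
  · exact .inr ⟨s, hs.card_eq, fun u hu v hv => hs.isIndepSet hu hv⟩

theorem exists_isNClique_or_isNIndepSet_of_ramseyNumber_le (G : SimpleGraph V) {a b : ℕ}
    {Z : Finset V} (hZ : ramseyNumber a b ≤ #Z) :
    (∃ s ⊆ Z, G.IsNClique a s) ∨ ∃ s ⊆ Z, G.IsNIndepSet b s := by
  let e : Fin #Z ↪ V := Z.equivFin.symm.toEmbedding.trans (Function.Embedding.subtype _)
  have he (s : Finset (Fin #Z)) : s.map e ⊆ Z := fun x hx => by
    obtain ⟨i, -, rfl⟩ := mem_map.mp hx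
    exact (Z.equivFin.symm i).2
  have hpair : ∀ (r : V → V → Prop) (s : Finset (Fin #Z)),
      (∀ u ∈ s, ∀ v ∈ s, u ≠ v → r (e u) (e v)) → (s.map e : Set V).Pairwise r :=
    fun r s h => by
      rw [coe_map, e.injective.injOn.pairwise_image]
      exact fun u hu v hv => h u hu v hv
  rcases ramseyNumber_spec a b #Z (G.comap e) hZ with ⟨s, hcard, hs⟩ | ⟨s, hcard, hs⟩
  · exact .inl ⟨s.map e, he s, ⟨hpair _ s hs, by rw [card_map, hcard]⟩⟩
  · exact .inr ⟨s.map e, he s, ⟨hpair _ s hs, by rw [card_map, hcard]⟩⟩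

theorem three_le_ramseyNumber {n : ℕ} (hn : 3 ≤ n) : 3 ≤ ramseyNumber (n - 1) n := by
  by_contra! h
  rcases (⊥ : SimpleGraph (Fin 2)).exists_isNClique_or_isNIndepSet_of_ramseyNumber_le
    (a := n - 1) (b := n) (Z := univ) (by simp; omega) with ⟨s, -, hs⟩ | ⟨s, -, hs⟩
  · have := (isNClique_bot_iff.mp hs).1
    omega
  · have := hs.card_eq ▸ card_le_univ s
    simp at this
    omega

theorem hasInducedCopy_sTilde {n : ℕ} {v : V} {s : Finset V} {z : V → V} (hs : #s = n)
    (hv : ∀ u ∈ s, G.Adj v u ∧ G.Adj v (z u)) (hsind : G.IsIndepSet s)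
    (hzind : (G.comap z).IsIndepSet s) (hz : ∀ u ∈ s, ∀ u' ∈ s, G.Adj u' (z u) ↔ u' = u) :
    HasInducedCopy G (STilde n) := by
  let e := (s.equivFinOfCardEq hs).symm
  let u : Fin n → V := fun i => e i
  have hus (i : Fin n) : u i ∈ s := (e i).2
  have hu_eq {i k : Fin n} : u i = u k ↔ i = k :=
    (Subtype.val_injective.comp e.injective).eq_iff
  have huz (i k : Fin n) : G.Adj (u i) (z (u k)) ↔ k = i := by
    rw [hz _ (hus k) _ (hus i), hu_eq, eq_comm]
  have hvu (i : Fin n) : G.Adj v (u i) := (hv _ (hus i)).1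
  have hvz (i : Fin n) : G.Adj v (z (u i)) := (hv _ (hus i)).2
  have huu (i k : Fin n) : ¬ G.Adj (u i) (u k) := hsind.not_adj (hus i) (hus k)
  have hzz (i k : Fin n) : ¬ G.Adj (z (u i)) (z (u k)) := hzind.not_adj (hus i) (hus k)
  have hzu (i k : Fin n) : G.Adj (z (u i)) (u k) ↔ i = k := by rw [G.adj_comm, huz]
  let F : Unit ⊕ Fin n ⊕ Fin n → V := Sum.elim (fun _ => v) (Sum.elim u (z ∘ u))
  have hF (a b) : G.Adj (F a) (F b) ↔ (STilde n).Adj a b := by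
    rcases a with _ | i | i <;> rcases b with _ | k | k <;>
      simp [F, STilde, hvu, hvz, (hvu _).symm, (hvz _).symm, huu, hzz, huz, hzu]
  have hF_inj : F.Injective := by
    intro a b hab
    rcases a with _ | i | i <;> rcases b with _ | k | k <;>
      simp only [F, Sum.elim_inl, Sum.elim_inr, Function.comp_apply] at hab
    · rfl
    · exact absurd hab (hvu k).ne
    · exact absurd hab (hvz k).ne
    · exact absurd hab.symm (hvu i).ne
    · rw [hu_eq.mp hab]
    · exact absurd (by rw [hab]; exact (huz k k).mpr rfl) (huu k i)
    · exact absurd hab.symm (hvz i).ne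
    · exact absurd (by rw [← hab]; exact (huz i i).mpr rfl) (huu i k)
    · rw [(huz k i).mp (by rw [hab]; exact (huz k k).mpr rfl)]
  exact ⟨⟨F, hF_inj⟩, hF⟩

end

variable {V : Type*} {G : SimpleGraph V} [DecidableEq V]

theorem IsNClique.image_of_comap {W : Type*} {f : W → V} {k : ℕ} {s : Finset W}
    (h : (G.comap f).IsNClique k s) : G.IsNClique k (s.image f) := by
  refine ⟨?_, ?_⟩
  · rw [coe_image]
    rintro _ ⟨x, hx, rfl⟩ _ ⟨y, hy, rfl⟩ hxy
    exact h.isClique hx hy (ne_of_apply_ne f hxy)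
  · rw [card_image_of_injOn, h.card_eq]
    intro x hx y hy hxy
    by_contra hne
    exact (show G.Adj (f x) (f y) from h.isClique hx hy hne).ne hxy

theorem card_lt_ramseyNumber_of_privateNeighbors {n : ℕ} (hK : G.CliqueFree n)
    (hS : ¬ HasInducedCopy G (STilde n)) {v : V} {A : Finset V} {z : V → V}
    (hv : ∀ u ∈ A, G.Adj v u ∧ G.Adj v (z u)) (hA : G.IsIndepSet A)
    (hz : ∀ u ∈ A, ∀ u' ∈ A, G.Adj u' (z u) ↔ u' = u) :
    #A < ramseyNumber (n - 1) n := by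
  by_contra! h
  rcases (G.comap z).exists_isNClique_or_isNIndepSet_of_ramseyNumber_le h with
    ⟨s, hsA, hs⟩ | ⟨s, hsA, hs⟩
  · obtain _ | n := n
    · exact not_cliqueFree_zero hK
    refine hK (insert v (s.image z)) (hs.image_of_comap.insert fun w hw => ?_)
    obtain ⟨x, hx, rfl⟩ := mem_image.mp hw
    exact (hv x (hsA hx)).2
  · exact hS (hasInducedCopy_sTilde hs.card_eq (fun u hu => hv u (hsA hu))
      (hA.mono (by exact_mod_cast hsA)) hs.isIndepSet
      (fun u hu u' hu' => hz u (hsA hu) u' (hsA hu')))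

theorem exists_isIndepSet_subset_dominating (Y : Finset V) :
    ∃ I ⊆ Y, G.IsIndepSet I ∧ ∀ w ∈ Y \ I, ∃ u ∈ I, G.Adj u w := by
  classical
  obtain ⟨I, hI, hmax⟩ := (Y.powerset.filter fun I : Finset V => G.IsIndepSet (I : Set V)
    ).exists_max_image card ⟨∅, by simp⟩
  simp only [mem_filter, mem_powerset] at hI hmax
  refine ⟨I, hI.1, hI.2, fun w hw => ?_⟩
  obtain ⟨hwY, hwI⟩ := mem_sdiff.mp hw
  by_contra! hno
  have hins : G.IsIndepSet (insert w I : Set V) :=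
    hI.2.insert_of_notMem (by exact_mod_cast hwI)
      fun u hu => ⟨fun h => hno u hu h.symm, hno u hu⟩
  have := hmax _ ⟨insert_subset hwY hI.1, by rwa [coe_insert]⟩
  rw [card_insert_of_notMem hwI] at this
  omega

theorem exists_subset_dominating_privateNeighbors {I W : Finset V}
    (hI : ∀ w ∈ W, ∃ u ∈ I, G.Adj u w) :
    ∃ A ⊆ I, (∀ w ∈ W, ∃ u ∈ A, G.Adj u w) ∧
      ∀ u ∈ A, ∃ z ∈ W, ∀ u' ∈ A, G.Adj u' z ↔ u' = u := by
  classical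
  obtain ⟨A, hA, hmin⟩ := (I.powerset.filter fun A => ∀ w ∈ W, ∃ u ∈ A, G.Adj u w
    ).exists_min_image card ⟨I, by simpa using hI⟩
  simp only [mem_filter, mem_powerset] at hA hmin
  obtain ⟨hAI, hAdom⟩ := hA
  refine ⟨A, hAI, hAdom, fun u hu => ?_⟩
  by_contra hpriv
  have herase : ∀ w ∈ W, ∃ u' ∈ A.erase u, G.Adj u' w := by
    intro w hw
    obtain ⟨u₀, hu₀, hadj⟩ := hAdom w hw
    by_contra! hno
    have hu₀u : u₀ = u := by
      by_contra hne
      exact hno u₀ (mem_erase.mpr ⟨hne, hu₀⟩) hadj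
    refine hpriv ⟨w, hw, fun u' hu' => ⟨fun h => ?_, ?_⟩⟩
    · by_contra hne
      exact hno u' (mem_erase.mpr ⟨hne, hu'⟩) h
    · rintro rfl
      exact hu₀u ▸ hadj
  have := hmin _ ⟨(erase_subset u A).trans hAI, herase⟩
  rw [card_erase_of_mem hu] at this
  have := card_pos.mpr ⟨u, hu⟩
  omega

/-- `insert v L` is a star, and the fibres of `p` over `A` partition `Y \ L` into sets
`{u} ∪ F` with `F ⊆ N(u)`. -/
theorem exists_star_fiber_decomposition {n : ℕ} (hK : G.CliqueFree n)
    (hS : ¬ HasInducedCopy G (STilde n)) {v : V} {Y : Finset V} (hY : ↑Y ⊆ G.neighborSet v) :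
    ∃ (L A : Finset V) (p : V → V), L ⊆ Y ∧ G.IsIndepSet L ∧ A ⊆ Y \ L ∧
      #A < ramseyNumber (n - 1) n ∧ (∀ u ∈ A, p u = u) ∧
      ∀ w ∈ Y \ L, p w ∈ A ∧ (p w ≠ w → G.Adj (p w) w) := by
  classical
  obtain ⟨I, hIY, hIind, hIdom⟩ := exists_isIndepSet_subset_dominating (G := G) Y
  obtain ⟨A, hAI, hAdom, hApriv⟩ := exists_subset_dominating_privateNeighbors hIdom
  choose! z hzY hz using hApriv
  choose! q hqA hq using hAdom
  refine ⟨I \ A, A, fun w => if w ∈ A then w else q w, sdiff_subset.trans hIY,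
    hIind.mono (by simp), fun u hu => ?_, ?_, fun u hu => if_pos hu, fun w hw => ?_⟩
  · simp [hIY (hAI hu), hu]
  · refine card_lt_ramseyNumber_of_privateNeighbors (v := v) hK hS (fun u hu => ⟨?_, ?_⟩)
      (hIind.mono (by exact_mod_cast hAI)) hz
    · exact hY (hIY (hAI hu))
    · exact hY (mem_sdiff.mp (hzY u hu)).1
  · by_cases hwA : w ∈ A
    · simp [hwA]
    · have hwI : w ∈ Y \ I := by
        simp only [mem_sdiff] at hw ⊢
        tauto
      simpa [hwA] using ⟨hqA w hwI, fun _ => hq w hwI⟩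

theorem isInducedStarSet_insert {W : Type*} [Finite W] (H : SimpleGraph W) {c : W} {L : Set W}
    (hL : L.Nonempty) (hc : ∀ a ∈ L, H.Adj c a) (hind : H.IsIndepSet L) :
    IsInducedStarSet H (insert c L) := by
  classical
  have hcL : c ∉ L := fun h => H.irrefl (hc c h)
  have : Nonempty L := hL.to_subtype
  let e := Finite.equivFin L
  let φ : Unit ⊕ Fin (Nat.card L) ≃ ↥(insert c L) := (Equiv.sumComm _ _).trans
    ((Equiv.sumCongr e.symm Equiv.punitEquivPUnit).trans (Equiv.Set.insert hcL).symm)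
  have hφl (x : Unit) : (φ (.inl x) : W) = c := rfl
  have hφr (i : Fin (Nat.card L)) : (φ (.inr i) : W) = e.symm i := rfl
  refine ⟨Nat.card L, Nat.card_pos, ⟨RelIso.symm ⟨φ, ?_⟩⟩⟩
  rintro (_ | i) (_ | k) <;>
    simp only [comap_adj, Function.Embedding.coe_subtype, hφl, hφr, _root_.starGraph,
      completeBipartiteGraph_adj]
  · simp
  · exact iff_of_true (hc _ (e.symm k).2) (.inl ⟨rfl, rfl⟩)
  · exact iff_of_true (hc _ (e.symm i).2).symm (.inr ⟨rfl, rfl⟩)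
  · exact iff_of_false (hind.not_adj (e.symm i).2 (e.symm k).2)
      (by rintro (⟨h, -⟩ | ⟨-, h⟩) <;> cases h)

/-- `L = ∅` is allowed: a single vertex counts as a star, as in `insp`. -/
def IsStar (G : SimpleGraph V) (S : Finset V) : Prop :=
  ∃ c L, S = insert c L ∧ (∀ a ∈ L, G.Adj c a) ∧ G.IsIndepSet (L : Set V)

def IsStarPartition (G : SimpleGraph V) (U : Finset V) (𝒮 : Finset (Finset V)) : Prop :=
  (∀ S ∈ 𝒮, G.IsStar S) ∧ (𝒮 : Set (Finset V)).PairwiseDisjoint id ∧ 𝒮.biUnion id = U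

theorem IsStarPartition.subset {U : Finset V} {𝒮 : Finset (Finset V)}
    (h : G.IsStarPartition U 𝒮) {S : Finset V} (hS : S ∈ 𝒮) : S ⊆ U :=
  h.2.2 ▸ subset_biUnion_of_mem id hS

theorem isStarPartition_singleton {S : Finset V} (h : G.IsStar S) :
    G.IsStarPartition S {S} :=
  ⟨by simpa using h, by simp, by simp⟩

theorem IsStarPartition.union {U₁ U₂ : Finset V} {𝒮₁ 𝒮₂ : Finset (Finset V)}
    (h₁ : G.IsStarPartition U₁ 𝒮₁) (h₂ : G.IsStarPartition U₂ 𝒮₂) (hU : Disjoint U₁ U₂) :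
    G.IsStarPartition (U₁ ∪ U₂) (𝒮₁ ∪ 𝒮₂) := by
  refine ⟨fun S hS => (mem_union.mp hS).elim (h₁.1 S) (h₂.1 S), ?_, ?_⟩
  · rw [coe_union, Set.pairwiseDisjoint_union]
    exact ⟨h₁.2.1, h₂.2.1, fun S hS T hT _ => hU.mono (h₁.subset hS) (h₂.subset hT)⟩
  · rw [union_biUnion, h₁.2.2, h₂.2.2]

theorem IsStarPartition.biUnion {ι : Type*} {A : Finset ι} {U : ι → Finset V}
    {𝒮 : ι → Finset (Finset V)} (h : ∀ i ∈ A, G.IsStarPartition (U i) (𝒮 i))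
    (hU : (A : Set ι).PairwiseDisjoint U) :
    G.IsStarPartition (A.biUnion U) (A.biUnion 𝒮) := by
  refine ⟨fun S hS => ?_, fun S hS T hT hST => ?_, ?_⟩
  · obtain ⟨i, hi, hS⟩ := mem_biUnion.mp hS
    exact (h i hi).1 S hS
  · obtain ⟨i, hi, hS⟩ := mem_biUnion.mp hS
    obtain ⟨j, hj, hT⟩ := mem_biUnion.mp hT
    by_cases hij : i = j
    · subst hij
      exact (h i hi).2.1 hS hT hST
    · exact (hU hi hj hij).mono ((h i hi).subset hS) ((h j hj).subset hT)
  · rw [biUnion_biUnion]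
    exact biUnion_congr rfl fun i hi => (h i hi).2.2

theorem IsStarPartition.of_fibers {v : V} {Y L A : Finset V} {p : V → V}
    {𝒮 : V → Finset (Finset V)} (hvY : v ∉ Y) (hLY : L ⊆ Y) (hstar : G.IsStar (insert v L))
    (hp : ∀ w ∈ Y \ L, p w ∈ A)
    (h𝒮 : ∀ u ∈ A, G.IsStarPartition ((Y \ L).filter (p · = u)) (𝒮 u)) :
    G.IsStarPartition (insert v Y) ({insert v L} ∪ A.biUnion 𝒮) := by
  have hfibers := IsStarPartition.biUnion h𝒮 (Set.pairwiseDisjoint_filter p _ _)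
  rw [biUnion_filter_eq_of_maps_to hp] at hfibers
  have hdisj : Disjoint (insert v L) (Y \ L) :=
    disjoint_insert_left.mpr ⟨fun hv => hvY (mem_sdiff.mp hv).1, disjoint_sdiff⟩
  have := (isStarPartition_singleton hstar).union hfibers hdisj
  rwa [insert_union, union_sdiff_of_subset hLY] at this

theorem IsStar.induce {S U : Finset V} (h : G.IsStar S) (hSU : S ⊆ U) :
    IsInducedStarSet (G.induce (U : Set V)) {p | ↑p ∈ S} ∨
      IsSingletonSet {p : (U : Set V) | ↑p ∈ S} := by
  obtain ⟨c, L, rfl, hc, hL⟩ := h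
  have hcU : c ∈ (U : Set V) := hSU (mem_insert_self c L)
  have hS : {p : (U : Set V) | ↑p ∈ insert c L} =
      insert (⟨c, hcU⟩ : (U : Set V)) {p : (U : Set V) | ↑p ∈ L} := by
    ext p
    simp [Subtype.ext_iff]
  rw [hS]
  rcases L.eq_empty_or_nonempty with rfl | ⟨a, ha⟩
  · exact .inr ⟨⟨c, hcU⟩, by simp⟩
  · refine .inl (isInducedStarSet_insert _ ⟨⟨a, hSU (mem_insert_of_mem ha)⟩, ha⟩
      (fun b hb => hc _ hb) fun x hx y hy hxy => hL hx hy (Subtype.coe_injective.ne hxy))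

theorem IsStarPartition.insp_induce_le {U : Finset V} {𝒮 : Finset (Finset V)}
    (h : G.IsStarPartition U 𝒮) : insp (G.induce (U : Set V)) ≤ #𝒮 := by
  let piece (S : Finset V) : Set (U : Set V) := {p | ↑p ∈ S}
  have hP : IsPartitionBy (𝒮.image piece)
      (fun S => IsInducedStarSet (G.induce (U : Set V)) S ∨ IsSingletonSet S) := by
    refine ⟨⟨?_, fun p => ?_⟩, ?_⟩
    · simp only [mem_image]
      rintro _ ⟨S, hS, rfl⟩
      exact (h.1 S hS).induce (h.subset hS)
    · have hp : (p : V) ∈ 𝒮.biUnion id := h.2.2 ▸ p.2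
      obtain ⟨S, hS, hpS⟩ := mem_biUnion.mp hp
      exact ⟨piece S, mem_image_of_mem _ hS, hpS⟩
    · intro _ hA _ hB hAB p hpA hpB
      obtain ⟨S, hS, rfl⟩ := mem_image.mp hA
      obtain ⟨T, hT, rfl⟩ := mem_image.mp hB
      exact Finset.disjoint_left.mp (h.2.1 hS hT fun hST => hAB (hST ▸ rfl))
        (show (p : V) ∈ S from hpA) (show (p : V) ∈ T from hpB)
  calc insp (G.induce (U : Set V)) ≤ #(𝒮.image piece) := Nat.sInf_le ⟨_, rfl, hP⟩
    _ ≤ #𝒮 := card_image_le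

theorem exists_isStarPartition_insert {n : ℕ} (hK : G.CliqueFree n)
    (hS : ¬ HasInducedCopy G (STilde n)) (i : ℕ) (v : V) (Y : Finset V)
    (hY : ↑Y ⊆ G.neighborSet v) (hfree : G.CliqueFreeOn Y (i + 2)) :
    ∃ 𝒮, G.IsStarPartition (insert v Y) 𝒮 ∧
      #𝒮 ≤ ∑ k ∈ range (i + 1), (ramseyNumber (n - 1) n - 1) ^ k := by
  set t := ramseyNumber (n - 1) n - 1 with ht
  induction i generalizing v Y with
  | zero =>
    refine ⟨{insert v Y}, isStarPartition_singleton ⟨v, Y, rfl, fun a ha => hY ha, ?_⟩, by simp⟩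
    exact (cliqueFreeOn_two G).mp hfree
  | succ i ih =>
    obtain ⟨L, A, p, hLY, hL, hA, hAcard, hpA, hp⟩ := exists_star_fiber_decomposition hK hS hY
    have hfiber (u : V) (hu : u ∈ A) : ∃ 𝒮, G.IsStarPartition ((Y \ L).filter (p · = u)) 𝒮 ∧
        #𝒮 ≤ ∑ k ∈ range (i + 1), t ^ k := by
      have hu_mem : u ∈ (Y \ L).filter (p · = u) := mem_filter.mpr ⟨hA hu, hpA u hu⟩
      have hnbr : ∀ w ∈ ((Y \ L).filter (p · = u)).erase u, w ∈ Y ∧ G.Adj u w := by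
        intro w hw
        obtain ⟨hwu, hw⟩ := mem_erase.mp hw
        obtain ⟨hwY, rfl⟩ := mem_filter.mp hw
        exact ⟨(mem_sdiff.mp hwY).1, (hp w hwY).2 hwu.symm⟩
      rw [← insert_erase hu_mem]
      exact ih u _ (fun w hw => (hnbr w hw).2)
        ((hfree.of_succ G (mem_sdiff.mp (hA hu)).1).subset G fun w hw => hnbr w hw)
    choose! 𝒮 h𝒮 h𝒮card using hfiber
    refine ⟨_, IsStarPartition.of_fibers (fun hv => G.irrefl (hY hv)) hLY
      ⟨v, L, rfl, fun a ha => hY (hLY ha), hL⟩ (fun w hw => (hp w hw).1) h𝒮, ?_⟩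
    calc #({insert v L} ∪ A.biUnion 𝒮)
        ≤ 1 + #A * ∑ k ∈ range (i + 1), t ^ k :=
          (card_union_le _ _).trans (add_le_add (card_singleton _).le
            (card_biUnion_le_card_mul _ _ _ h𝒮card))
      _ ≤ 1 + t * ∑ k ∈ range (i + 1), t ^ k := by
          gcongr
          omega
      _ = ∑ k ∈ range (i + 2), t ^ k := by
          rw [geom_sum_succ (n := i + 1), add_comm]

end SimpleGraph

theorem xi_eq_sum_range {n : ℕ} (hn : 3 ≤ n) (i : ℕ) :
    xi n i = ∑ k ∈ range i, (ramseyNumber (n - 1) n - 1) ^ k := by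
  have := SimpleGraph.three_le_ramseyNumber hn
  rw [xi, Nat.geomSum_eq (by omega)]
  rfl

theorem statement_4 (n : ℕ) (hn : 3 ≤ n) (V : Type) [Fintype V] (G : SimpleGraph V)
    (hK : ¬ HasInducedCopy G (completeGraph (Fin n)))
    (hS : ¬ HasInducedCopy G (STilde n))
    (x : V) (X : Set V) (hX : X ⊆ G.neighborSet x) :
    insp (G.induce ({x} ∪ X)) ≤ xi n (n - 2) := by
  classical
  obtain ⟨k, rfl⟩ : ∃ k, n = k + 3 := ⟨n - 3, by omega⟩
  have hKfree := cliqueFree_of_not_hasInducedCopy hK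
  have hfree : G.CliqueFreeOn (X.toFinset : Set V) (k + 2) := by
    rw [Set.coe_toFinset]
    exact (hKfree.cliqueFreeOn.of_succ G (Set.mem_univ x)).subset G
      (Set.subset_inter (Set.subset_univ X) hX)
  obtain ⟨𝒮, h𝒮, hcard⟩ :=
    exists_isStarPartition_insert hKfree hS k x X.toFinset (by simpa using hX) hfree
  have hU : ({x} ∪ X : Set V) = ↑(insert x X.toFinset) := by
    ext
    simp
  rw [hU, xi_eq_sum_range hn]
  exact h𝒮.insp_induce_le.trans hcard
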